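/- Let l and p be odd primes and let E be an elliptic curve over ℚ such that the homomorphism Gal(ℚ̄/ℚ) → AddAut(E(ℚ̄)[l]) induced by the Galois action on points is surjective. Let K ⊆ ℚ̄ be a finite Galois extension of ℚ whose degree [K:ℚ] is a power of p. Then E(K) has no point of order l, i.e., E(K)[l] = 0. -/

import Mathlib

open WeierstrassCurve WeierstrassCurve.Affine
open scoped Classical

/-! Surjectivity provides `σ ∈ Gal(ℚ̄/ℚ)` acting as `-1` on `E[l]`. Then `σ ^ p ^ n` still
acts as `(-1) ^ p ^ n = -1` on `E[l]`, but it is the identity on `K` because `Gal(K/ℚ)` has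
order `p ^ n`. Hence an `l`-torsion point `Q ∈ E(K)` satisfies `Q = -Q`, i.e. `2 • Q = 0`, and
`Q = 0` as `l` is odd. -/

theorem eq_zero_of_neg_eq_of_odd_nsmul_eq_zero {A : Type*} [AddCommGroup A] {l : ℕ} {x : A}
    (hl : Odd l) (hx : l • x = 0) (hneg : -x = x) : x = 0 := by
  obtain ⟨k, rfl⟩ := hl
  have hx2 : 2 • x = 0 := by rw [two_nsmul]; nth_rw 1 [← hneg]; exact neg_add_cancel x
  rwa [add_nsmul, mul_nsmul, hx2, nsmul_zero, zero_add, one_nsmul] at hx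

theorem AddMonoid.End.pow_apply_of_apply_eq_neg {A : Type*} [AddCommGroup A] {f : AddMonoid.End A}
    {x : A} (h : f x = -x) (m : ℕ) : (f ^ m) x = (-1 : ℤ) ^ m • x := by
  induction m with
  | zero => simp
  | succ m ih =>
    rw [pow_succ, AddMonoid.End.coe_mul, Function.comp_apply, h, map_neg, ih, pow_succ,
      mul_neg_one, neg_zsmul]

theorem IntermediateField.pow_finrank_apply {F L : Type*} [Field F] [Field L] [Algebra F L]
    (K : IntermediateField F L) [FiniteDimensional F K] [IsGalois F K] (σ : L ≃ₐ[F] L)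
    (x : K) : (σ ^ Module.finrank F K) x = x := by
  rw [← AlgEquiv.restrictNormalHom_apply K, map_pow, ← IsGalois.card_aut_eq_finrank,
    pow_card_eq_one', AlgEquiv.one_apply]

namespace WeierstrassCurve.Affine.Point

variable {R S L : Type*} [CommRing R] [CommRing S] [Field L] [DecidableEq L] [Algebra R S]
  [Algebra R L] [Algebra S L] [IsScalarTower R S L] {W : Affine R}

variable (W) in
noncomputable def galoisAction : (L ≃ₐ[S] L) →* AddMonoid.End (W⁄L).Point where
  toFun σ := map (W' := W) (S := S) σ.toAlgHom
  map_one' := by ext P; cases P <;> rfl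
  map_mul' σ τ := by ext P; exact (map_map (W' := W) (S := S) τ.toAlgHom σ.toAlgHom P).symm

theorem galoisAction_apply (σ : L ≃ₐ[S] L) (P : (W⁄L).Point) :
    galoisAction W σ P = map σ.toAlgHom P :=
  rfl

theorem galoisAction_pow_finrank_map_val {F : Type*} [Field F] [Algebra R F] [Algebra F L]
    [IsScalarTower R F L] (K : IntermediateField F L) [hK : FiniteDimensional F K]
    [hG : IsGalois F K] (σ : L ≃ₐ[F] L) (P : (W⁄K).Point) :
    galoisAction W (σ ^ Module.finrank F K) (map K.val P) = map K.val P := by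
  have hfix : (σ ^ Module.finrank F K).toAlgHom.comp K.val = K.val :=
    AlgHom.ext (K.pow_finrank_apply σ)
  rw [galoisAction_apply, map_map, hfix]

end WeierstrassCurve.Affine.Point

theorem no_l_torsion_over_p_power_galois_general (l p : ℕ) (hlodd : Odd l)
    (hpodd : Odd p)
    (E : WeierstrassCurve ℚ)
    (hsurj : ∀ φ : Submodule.torsionBy ℤ (Affine.Point (Affine.baseChange E (AlgebraicClosure ℚ))) (l : ℤ) ≃+
        Submodule.torsionBy ℤ (Affine.Point (Affine.baseChange E (AlgebraicClosure ℚ))) (l : ℤ),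
      ∃ σ : AlgebraicClosure ℚ ≃ₐ[ℚ] AlgebraicClosure ℚ,
        ∀ P : Submodule.torsionBy ℤ (Affine.Point (Affine.baseChange E (AlgebraicClosure ℚ))) (l : ℤ),
          Affine.Point.map (W' := E) σ.toAlgHom P.1 = (φ P).1)
    (K : IntermediateField ℚ (AlgebraicClosure ℚ))
    (hfin : FiniteDimensional ℚ K) (hgal : IsGalois ℚ K)
    (hdeg : ∃ n : ℕ, Module.finrank ℚ K = p ^ n) :
    ∀ P : Affine.Point (Affine.baseChange E K), l • P = 0 → P = 0 := by
  intro P hP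
  obtain ⟨n, hn⟩ := hdeg
  set Q := Point.map (W' := E) K.val P
  have hlQ : l • Q = 0 := by rw [← map_nsmul, hP, map_zero]
  have hQ : Q ∈ Submodule.torsionBy ℤ _ (l : ℤ) := by
    rwa [Submodule.mem_torsionBy_iff, natCast_zsmul]
  obtain ⟨σ, hσ⟩ := hsurj (AddEquiv.neg _)
  have hσQ : Point.galoisAction E σ Q = -Q := hσ ⟨Q, hQ⟩
  have hfix : Point.galoisAction E (σ ^ p ^ n) Q = Q := by
    rw [← hn]
    -- `hfin` and `hgal` refer to `DivisionRing.toRatAlgebra`, which is only defeq, not reducibly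
    -- equal, to the `ℚ`-algebra structure of an intermediate field.
    exact Point.galoisAction_pow_finrank_map_val K σ P (hK := hfin) (hG := hgal)
  have hneg : Point.galoisAction E (σ ^ p ^ n) Q = -Q := by
    rw [map_pow, AddMonoid.End.pow_apply_of_apply_eq_neg hσQ, hpodd.pow.neg_one_pow,
      neg_one_zsmul]
  have hQ0 : Q = 0 := eq_zero_of_neg_eq_of_odd_nsmul_eq_zero hlodd hlQ (hneg ▸ hfix)
  exact Point.map_injective (W' := E) K.val (hQ0.trans (map_zero _).symm)

/-- Let `l` and `p` be odd primes and `E` an elliptic curve over `ℚ` whose mod `l` Galois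
representation is surjective (every additive automorphism of the `l`-torsion of `E(ℚ̄)` is
induced by some element of `Gal(ℚ̄/ℚ)`). If `K ⊆ ℚ̄` is a finite Galois extension of `ℚ` of
`p`-power degree, then `E(K)` has no point of order `l`. -/
theorem no_l_torsion_over_p_power_galois (l p : ℕ) (hl : l.Prime) (hlodd : Odd l)
    (hp : p.Prime) (hpodd : Odd p)
    (E : WeierstrassCurve ℚ) [E.IsElliptic]
    (hsurj : ∀ φ : Submodule.torsionBy ℤ (Affine.Point (Affine.baseChange E (AlgebraicClosure ℚ))) (l : ℤ) ≃+
        Submodule.torsionBy ℤ (Affine.Point (Affine.baseChange E (AlgebraicClosure ℚ))) (l : ℤ),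
      ∃ σ : AlgebraicClosure ℚ ≃ₐ[ℚ] AlgebraicClosure ℚ,
        ∀ P : Submodule.torsionBy ℤ (Affine.Point (Affine.baseChange E (AlgebraicClosure ℚ))) (l : ℤ),
          Affine.Point.map (W' := E) σ.toAlgHom P.1 = (φ P).1)
    (K : IntermediateField ℚ (AlgebraicClosure ℚ))
    (hfin : FiniteDimensional ℚ K) (hgal : IsGalois ℚ K)
    (hdeg : ∃ n : ℕ, Module.finrank ℚ K = p ^ n) :
    ∀ P : Affine.Point (Affine.baseChange E K), l • P = 0 → P = 0 :=
  no_l_torsion_over_p_power_galois_general l p hlodd hpodd E hsurj K hfin hgal hdeg
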